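/- Let 1 → E → H → M → 1 be a short exact sequence of groups where E is free and M is torsion-free elementary amenable. Then H has the factorization property. -/

import Mathlib

universe u

/-- The notion `Monoid.IsTorsionFree` as it stood in Mathlib (December 2024). -/
def Monoid.IsTorsionFree (G : Type*) [Monoid G] : Prop :=
  ∀ g : G, g ≠ 1 → ¬IsOfFinOrder g

/-- The class of elementary amenable groups: the smallest class of groups containing
all finite groups and all abelian groups, closed under subgroups, quotients,
extensions, and directed unions (and isomorphism). -/
inductive ElementaryAmenable : ∀ (G : Type u) [Group G], Prop
  | of_finite (G : Type u) [Group G] (h : Finite G) : ElementaryAmenable G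
  | of_abelian (G : Type u) [Group G] (h : ∀ a b : G, a * b = b * a) : ElementaryAmenable G
  | of_subgroup (G : Type u) [Group G] (H : Subgroup G) (h : ElementaryAmenable G) :
      ElementaryAmenable H
  | of_quotient (G : Type u) [Group G] (N : Subgroup G) [N.Normal] (h : ElementaryAmenable G) :
      ElementaryAmenable (G ⧸ N)
  | of_extension (G : Type u) [Group G] (N : Subgroup G) [N.Normal]
      (hN : ElementaryAmenable N) (hQ : ElementaryAmenable (G ⧸ N)) : ElementaryAmenable G
  | of_directedUnion (G : Type u) [Group G] (ι : Type u) (K : ι → Subgroup G)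
      (hdir : Directed (· ≤ ·) K) (hsup : (⨆ i, K i) = ⊤)
      (h : ∀ i, ElementaryAmenable (K i)) : ElementaryAmenable G
  | of_mulEquiv (G H : Type u) [Group G] [Group H] (e : G ≃* H) (h : ElementaryAmenable G) :
      ElementaryAmenable H

/-- A group `H` has the factorization property if every homomorphism from `H` to a
finite group factors through a torsion-free elementary amenable group. -/
def HasFactorizationProperty (H : Type u) [Group H] : Prop :=
  ∀ (P : GrpCat.{u}), Finite P → ∀ f : H →* P,
    ∃ (M : GrpCat.{u}) (g : H →* M) (h : (M : Type u) →* P),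
      Monoid.IsTorsionFree M ∧ ElementaryAmenable M ∧ h.comp g = f

/-!
Given `f : H →* P` with `P` finite, let `A` be the kernel of `(π, f) : H →* M × P` and factor `f`
through `H ⧸ ⁅A, A⁆`. This quotient is elementary amenable, being abelian-by-(a subgroup of
`M × P`). It is torsion-free: if `x ^ n ∈ ⁅A, A⁆` then `x ∈ ker π` because `M` is torsion-free;
the subgroup `S = A ⊔ ⟨x⟩` of the free group `ker π` is free (Nielsen–Schreier) with `S ⧸ A`
cyclic, so `⁅S, S⁆ ≤ A`, and torsion-freeness of the abelianizations of the free groups `S` and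
`A` yields first `x ∈ A` and then `x ∈ ⁅A, A⁆`.
-/

open Subgroup

namespace ElementaryAmenable

variable {G Q : Type u} [Group G] [Group Q]

theorem of_injective (φ : G →* Q) (hφ : Function.Injective φ) (hQ : ElementaryAmenable Q) :
    ElementaryAmenable G :=
  of_mulEquiv _ _ (MonoidHom.ofInjective hφ).symm (of_subgroup Q φ.range hQ)

theorem of_ker (φ : G →* Q) (hker : ElementaryAmenable φ.ker) (hQ : ElementaryAmenable Q) :
    ElementaryAmenable G :=
  of_extension G φ.ker hker
    (of_mulEquiv _ _ (QuotientGroup.quotientKerEquivRange φ).symm (of_subgroup Q φ.range hQ))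

theorem prod (hG : ElementaryAmenable G) (hQ : ElementaryAmenable Q) :
    ElementaryAmenable (G × Q) := by
  refine of_ker (MonoidHom.snd G Q)
    (of_injective ((MonoidHom.fst G Q).comp (MonoidHom.snd G Q).ker.subtype) ?_ hG) hQ
  rintro ⟨⟨a, b⟩, rfl : b = 1⟩ ⟨⟨c, d⟩, rfl : d = 1⟩ (rfl : a = c)
  rfl

end ElementaryAmenable

theorem QuotientGroup.commute_mk_of_mem {G : Type*} [Group G] {A : Subgroup G} [A.Normal]
    {a b : G} (ha : a ∈ A) (hb : b ∈ A) : Commute (a : G ⧸ ⁅A, A⁆) (b : G ⧸ ⁅A, A⁆) := by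
  rw [← commutatorElement_eq_one_iff_commute, ← QuotientGroup.mk'_apply, ← QuotientGroup.mk'_apply,
    ← map_commutatorElement, QuotientGroup.mk'_apply, QuotientGroup.eq_one_iff]
  exact commutator_mem_commutator ha hb

theorem elementaryAmenable_quotient_commutator_ker {G Q : Type u} [Group G] [Group Q]
    (φ : G →* Q) (hQ : ElementaryAmenable Q) :
    ElementaryAmenable (G ⧸ ⁅φ.ker, φ.ker⁆) := by
  refine ElementaryAmenable.of_ker (QuotientGroup.lift _ φ (commutator_le_self _))
    (.of_abelian _ ?_) hQ
  rintro ⟨a, ha⟩ ⟨b, hb⟩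
  induction a using QuotientGroup.induction_on
  induction b using QuotientGroup.induction_on
  rw [MonoidHom.mem_ker, QuotientGroup.lift_mk] at ha hb
  exact Subtype.ext (QuotientGroup.commute_mk_of_mem ha hb).eq

instance FreeAbelianGroup.isAddTorsionFree {α : Type*} : IsAddTorsionFree (FreeAbelianGroup α) :=
  Function.Injective.isAddTorsionFree (FreeAbelianGroup.equivFinsupp α).toAddMonoidHom
    (FreeAbelianGroup.equivFinsupp α).injective

-- `FreeAbelianGroup α` is defined as `Additive (Abelianization (FreeGroup α))`.
instance FreeGroup.isMulTorsionFree_abelianization {α : Type*} :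
    IsMulTorsionFree (Abelianization (FreeGroup α)) :=
  inferInstanceAs (IsMulTorsionFree (Multiplicative (FreeAbelianGroup α)))

instance IsFreeGroup.isMulTorsionFree_abelianization {G : Type*} [Group G] [IsFreeGroup G] :
    IsMulTorsionFree (Abelianization G) :=
  Function.Injective.isMulTorsionFree
    (IsFreeGroup.toFreeGroup G).abelianizationCongr.toMonoidHom
    (IsFreeGroup.toFreeGroup G).abelianizationCongr.injective

theorem IsFreeGroup.mem_commutator_of_pow_mem {G : Type*} [Group G] [IsFreeGroup G] {x : G}
    {n : ℕ} (hn : n ≠ 0) (h : x ^ n ∈ commutator G) : x ∈ commutator G := by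
  rw [← Abelianization.ker_of, MonoidHom.mem_ker] at h ⊢
  exact pow_left_injective hn (by simpa using h)

section FreeSubgroups

variable {G : Type*} [Group G]

theorem Subgroup.isFreeGroup_of_le {U K : Subgroup G} [IsFreeGroup K] (h : U ≤ K) :
    IsFreeGroup U :=
  IsFreeGroup.ofMulEquiv (subgroupOfEquivOfLe h)

theorem Subgroup.mem_commutator_of_pow_mem {U : Subgroup G} [IsFreeGroup U] {x : G} (hx : x ∈ U)
    {n : ℕ} (hn : n ≠ 0) (h : x ^ n ∈ ⁅U, U⁆) : x ∈ ⁅U, U⁆ := by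
  rw [← map_subtype_commutator] at h ⊢
  obtain ⟨y, hy, hyx⟩ := h
  obtain rfl : y = ⟨x, hx⟩ ^ n := U.subtype_injective (by simpa using hyx)
  exact ⟨⟨x, hx⟩, IsFreeGroup.mem_commutator_of_pow_mem hn hy, rfl⟩

theorem Subgroup.commutator_sup_closure_singleton_le (A : Subgroup G) [A.Normal] (x : G) :
    ⁅A ⊔ closure {x}, A ⊔ closure {x}⁆ ≤ A := by
  have hcyclic : (A ⊔ closure {x}).map (QuotientGroup.mk' A) = zpowers (x : G ⧸ A) := by
    rw [map_sup, QuotientGroup.map_mk'_self, MonoidHom.map_closure, Set.image_singleton,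
      zpowers_eq_closure, bot_sup_eq, QuotientGroup.mk'_apply]
  rw [commutator_le]
  intro a ha b hb
  obtain ⟨k, hk⟩ := mem_zpowers_iff.mp (hcyclic ▸ mem_map_of_mem (QuotientGroup.mk' A) ha)
  obtain ⟨l, hl⟩ := mem_zpowers_iff.mp (hcyclic ▸ mem_map_of_mem (QuotientGroup.mk' A) hb)
  rw [← QuotientGroup.ker_mk' A, MonoidHom.mem_ker, map_commutatorElement,
    commutatorElement_eq_one_iff_commute, ← hk, ← hl]
  exact Commute.zpow_zpow_self _ k l

theorem Subgroup.mem_commutator_of_pow_mem_of_le {K A : Subgroup G} [IsFreeGroup K] [A.Normal]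
    (hAK : A ≤ K) {x : G} (hx : x ∈ K) {n : ℕ} (hn : n ≠ 0) (h : x ^ n ∈ ⁅A, A⁆) :
    x ∈ ⁅A, A⁆ := by
  have hSK : A ⊔ closure {x} ≤ K := sup_le hAK ((closure_le _).mpr (by simpa using hx))
  have := isFreeGroup_of_le hSK
  have := isFreeGroup_of_le hAK
  have hxS : x ∈ A ⊔ closure {x} := mem_sup_right (subset_closure rfl)
  have hxA : x ∈ A := commutator_sup_closure_singleton_le A x
    (mem_commutator_of_pow_mem hxS hn (commutator_mono le_sup_left le_sup_left h))
  exact mem_commutator_of_pow_mem hxA hn h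

end FreeSubgroups

theorem isTorsionFree_quotient_commutator {G Q : Type*} [Group G] [Group Q] {φ : G →* Q}
    [IsFreeGroup φ.ker] (hQ : Monoid.IsTorsionFree Q) {A : Subgroup G} [A.Normal]
    (hA : A ≤ φ.ker) : Monoid.IsTorsionFree (G ⧸ ⁅A, A⁆) := by
  intro q hq hfin
  obtain ⟨n, hn, hqn⟩ := isOfFinOrder_iff_pow_eq_one.mp hfin
  induction q using QuotientGroup.induction_on with | H x => ?_
  apply hq
  rw [← QuotientGroup.mk_pow, QuotientGroup.eq_one_iff] at hqn
  have hxK : x ∈ φ.ker := by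
    by_contra hx
    refine hQ (φ x) hx (isOfFinOrder_iff_pow_eq_one.mpr ⟨n, hn, ?_⟩)
    rw [← map_pow]
    exact hA (commutator_le_self A hqn)
  exact QuotientGroup.eq_one_iff _ |>.mpr (mem_commutator_of_pow_mem_of_le hA hxK hn.ne' hqn)

theorem extension_free_by_tfea_hasFactorizationProperty_general
    (E H M : Type u) [Group E] [Group H] [Group M] [IsFreeGroup E]
    (i : E →* H) (π : H →* M) (hi : Function.Injective i)
    (hexact : π.ker = i.range)
    (hMtf : Monoid.IsTorsionFree M) (hMea : ElementaryAmenable M) :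
    HasFactorizationProperty H := by
  intro P hP f
  have : IsFreeGroup π.ker := hexact ▸ IsFreeGroup.ofMulEquiv (MonoidHom.ofInjective hi)
  set A := (π.prod f).ker
  have hA : A ≤ π.ker := (MonoidHom.ker_prod π f).trans_le inf_le_left
  have hf : ⁅A, A⁆ ≤ f.ker :=
    (commutator_le_self A).trans ((MonoidHom.ker_prod π f).trans_le inf_le_right)
  exact ⟨GrpCat.of (H ⧸ ⁅A, A⁆), QuotientGroup.mk' _, QuotientGroup.lift _ f hf,
    isTorsionFree_quotient_commutator hMtf hA,
    elementaryAmenable_quotient_commutator_ker _ (hMea.prod (.of_finite P hP)),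
    MonoidHom.ext (QuotientGroup.lift_mk' _ hf)⟩

/-- An extension of a free group by a torsion-free elementary amenable group has the
factorization property. -/
theorem extension_free_by_tfea_hasFactorizationProperty
    (E H M : Type u) [Group E] [Group H] [Group M] [IsFreeGroup E]
    (i : E →* H) (π : H →* M) (hi : Function.Injective i) (hπ : Function.Surjective π)
    (hexact : π.ker = i.range)
    (hMtf : Monoid.IsTorsionFree M) (hMea : ElementaryAmenable M) :
    HasFactorizationProperty H :=
  extension_free_by_tfea_hasFactorizationProperty_general E H M i π hi hexact hMtf hMea
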